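/- Let n ≥ 2 and W ∈ 𝒲ₙ. Then the tensor T^W satisfies ‖T^W‖ = 1 and μ(T^W) = (diag(q₁), diag(q₂), diag(q₃)), i.e. each component μ_i(T^W) is the diagonal matrix with diagonal entries given by the vector q_i. -/

import Mathlib

open scoped BigOperators Matrix

namespace NonFreePaper

/-- A tensor of format `a × b × c` over `ℂ`. -/
abbrev Tensor (a b c : ℕ) := Fin a → Fin b → Fin c → ℂ

variable {a b c : ℕ}

/-- The action of a triple of matrices on a tensor. -/
noncomputable def actT (g₁ : Matrix (Fin a) (Fin a) ℂ) (g₂ : Matrix (Fin b) (Fin b) ℂ)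
    (g₃ : Matrix (Fin c) (Fin c) ℂ) (T : Tensor a b c) : Tensor a b c :=
  fun i j k => ∑ i', ∑ j', ∑ k', g₁ i i' * g₂ j j' * g₃ k k' * T i' j' k'

/-- The support of a tensor. -/
def supp (T : Tensor a b c) : Set (Fin a × Fin b × Fin c) :=
  {p | T p.1 p.2.1 p.2.2 ≠ 0}

/-- A set of index triples is free if any two distinct elements differ in at
least two coordinates. -/
def IsFreeSet (S : Set (Fin a × Fin b × Fin c)) : Prop :=
  ∀ p ∈ S, ∀ q ∈ S, p ≠ q →
    2 ≤ (if p.1 = q.1 then 0 else 1) + (if p.2.1 = q.2.1 then 0 else 1)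
        + (if p.2.2 = q.2.2 then (0 : ℕ) else 1)

/-- A tensor is free if some basis change gives it free support. -/
noncomputable def IsFree (T : Tensor a b c) : Prop :=
  ∃ (g₁ : Matrix (Fin a) (Fin a) ℂ) (g₂ : Matrix (Fin b) (Fin b) ℂ)
    (g₃ : Matrix (Fin c) (Fin c) ℂ),
      IsUnit g₁ ∧ IsUnit g₂ ∧ IsUnit g₃ ∧ IsFreeSet (supp (actT g₁ g₂ g₃ T))

/-- The GL-orbit of a tensor. -/
noncomputable def orbitGL (T : Tensor a b c) : Set (Tensor a b c) :=
  {S | ∃ (g₁ : Matrix (Fin a) (Fin a) ℂ) (g₂ : Matrix (Fin b) (Fin b) ℂ)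
    (g₃ : Matrix (Fin c) (Fin c) ℂ),
      IsUnit g₁ ∧ IsUnit g₂ ∧ IsUnit g₃ ∧ actT g₁ g₂ g₃ T = S}

/-- The squared ℓ₂-norm of a tensor. -/
noncomputable def tnormSq (T : Tensor a b c) : ℝ :=
  ∑ i, ∑ j, ∑ k, Complex.normSq (T i j k)

/-- First component of the moment map. -/
noncomputable def mu1 (T : Tensor a b c) : Matrix (Fin a) (Fin a) ℂ :=
  Matrix.of fun i i' => ((tnormSq T : ℂ))⁻¹ * ∑ j, ∑ k, (starRingEnd ℂ) (T i j k) * T i' j k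

/-- Second component of the moment map. -/
noncomputable def mu2 (T : Tensor a b c) : Matrix (Fin b) (Fin b) ℂ :=
  Matrix.of fun j j' => ((tnormSq T : ℂ))⁻¹ * ∑ i, ∑ k, (starRingEnd ℂ) (T i j k) * T i j' k

/-- Third component of the moment map. -/
noncomputable def mu3 (T : Tensor a b c) : Matrix (Fin c) (Fin c) ℂ :=
  Matrix.of fun k k' => ((tnormSq T : ℂ))⁻¹ * ∑ i, ∑ j, (starRingEnd ℂ) (T i j k) * T i j k'

/-- Squared norm ‖μ(T)‖² (sum of the squared Frobenius norms of the components). -/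
noncomputable def muNormSq (T : Tensor a b c) : ℝ :=
  (∑ i, ∑ i', Complex.normSq (mu1 T i i')) + (∑ j, ∑ j', Complex.normSq (mu2 T j j'))
    + (∑ k, ∑ k', Complex.normSq (mu3 T k k'))

/-- The norm ‖μ(T)‖. -/
noncomputable def muNorm (T : Tensor a b c) : ℝ := Real.sqrt (muNormSq T)

/-- `N = n(n²−1)/6 + (n−1)/n`. -/
noncomputable def Nconst (n : ℕ) : ℝ :=
  ((n : ℝ) * ((n : ℝ) ^ 2 - 1)) / 6 + ((n : ℝ) - 1) / n

/-- `(h₁)_j = (n+1−2j)/2` for `j ∈ [n]` (1-based index). -/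
noncomputable def h1 (n : ℕ) (j : ℕ) : ℝ := ((n : ℝ) + 1 - 2 * j) / 2

/-- `h₂ = h₁`. -/
noncomputable def h2 (n : ℕ) (j : ℕ) : ℝ := h1 n j

/-- `(h₃)_j = 1/n` for `j ∈ [n−1]` and `(h₃)_n = 1/n − 1` (1-based index). -/
noncomputable def h3 (n : ℕ) (j : ℕ) : ℝ :=
  if j = n then 1 / (n : ℝ) - 1 else 1 / (n : ℝ)

/-- `(q₁)_j = 1/n + (n+1−2j)/(2nN)` for `j ∈ [n]` (1-based index). -/
noncomputable def q1 (n : ℕ) (j : ℕ) : ℝ :=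
  1 / (n : ℝ) + ((n : ℝ) + 1 - 2 * j) / (2 * n * Nconst n)

/-- `q₂ = q₁`. -/
noncomputable def q2 (n : ℕ) (j : ℕ) : ℝ := q1 n j

/-- `(q₃)_j = 1/n + 1/(n²N)` for `j ∈ [n−1]`, and `(q₃)_n = 1/n + (1/n − 1)/(nN)`
(1-based index). -/
noncomputable def q3 (n : ℕ) (j : ℕ) : ℝ :=
  if j = n then 1 / (n : ℝ) + (1 / (n : ℝ) - 1) / (n * Nconst n)
  else 1 / (n : ℝ) + 1 / ((n : ℝ) ^ 2 * Nconst n)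

/-- `b_j = Σ_{ℓ=1}^j ((q₂)_ℓ − (q₁)_{n+1−ℓ})`; in particular `b 0 = 0`. -/
noncomputable def bseq (n : ℕ) (j : ℕ) : ℝ :=
  ∑ ℓ ∈ Finset.range j, (q2 n (ℓ + 1) - q1 n (n - ℓ))
/-- `λ = (1 − (q₃)ₙ)/(n−1)`. -/
noncomputable def lamW (n : ℕ) : ℝ := (1 - q3 n n) / ((n : ℝ) - 1)

/-- `w_j = √(λ − (q₂)_j + b_j)` (`j` is the 1-based index `j.val + 1`). -/
noncomputable def wvec (n : ℕ) (j : Fin n) : ℝ :=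
  Real.sqrt (lamW n - q2 n (j.val + 1) + bseq n (j.val + 1))

/-- The set `𝒲ₙ` of `n × (n−1)` matrices `W` with `W*W = λ·I` and
`WW* = λ·I − wwᵀ`. -/
noncomputable def WSet (n : ℕ) : Set (Matrix (Fin n) (Fin (n - 1)) ℂ) :=
  {W | Wᴴ * W = (lamW n : ℂ) • (1 : Matrix (Fin (n - 1)) (Fin (n - 1)) ℂ) ∧
       W * Wᴴ = (lamW n : ℂ) • (1 : Matrix (Fin n) (Fin n) ℂ)
          - Matrix.of (fun i j => ((wvec n i * wvec n j : ℝ) : ℂ))}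

/-- The tensor `T^W`: `(T^W)_{n+1−i,i,k} = W_{i,k}` for `i ∈ [n]`, `k ∈ [n−1]`,
`(T^W)_{n−i,i,n} = √(b_i)` for `i ∈ [n−1]`, all other entries `0`
(1-based indices). -/
noncomputable def TW {n : ℕ} (W : Matrix (Fin n) (Fin (n - 1)) ℂ) : Tensor n n n :=
  fun x y z =>
    if h : z.val + 1 < n ∧ x.val + y.val + 1 = n then W y ⟨z.val, by omega⟩
    else if z.val + 1 = n ∧ x.val + y.val + 2 = n then
      (Real.sqrt (bseq n (y.val + 1)) : ℂ)
    else 0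
section RealLemmas

variable {n : ℕ}

lemma ncast_two (hn : 2 ≤ n) : (2:ℝ) ≤ (n:ℝ) := by exact_mod_cast hn

lemma Nconst_pos (hn : 2 ≤ n) : 0 < Nconst n := by
  have h : (2:ℝ) ≤ (n:ℝ) := ncast_two hn
  unfold Nconst
  have h1 : 0 < ((n:ℝ) * ((n:ℝ)^2 - 1)) / 6 := by nlinarith
  have h2 : 0 ≤ ((n:ℝ) - 1) / n := by
    apply div_nonneg <;> linarith
  linarith

lemma ncast_ne (hn : 2 ≤ n) : (n:ℝ) ≠ 0 := by
  have := ncast_two hn; linarith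

lemma bseq_zero : bseq n 0 = 0 := by simp [bseq]

lemma bseq_succ (j : ℕ) : bseq n (j+1) = bseq n j + (q2 n (j+1) - q1 n (n - j)) := by
  simp [bseq, Finset.sum_range_succ]; ring

lemma bseq_eq (hn : 2 ≤ n) {j : ℕ} (hj : j ≤ n) :
    bseq n j = (j * ((n:ℝ) - j)) / (n * Nconst n) := by
  have hN := (Nconst_pos hn).ne'
  have hn0 : (n:ℝ) ≠ 0 := ncast_ne hn
  induction j with
  | zero => simp [bseq_zero]
  | succ j ih =>
    have hj' : j ≤ n := by omega
    rw [bseq_succ, ih hj']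
    have hc : ((n - j : ℕ) : ℝ) = (n:ℝ) - j := by
      push_cast [Nat.cast_sub hj']; ring
    unfold q2 q1
    rw [hc]
    push_cast
    field_simp
    ring

lemma bseq_nonneg (hn : 2 ≤ n) {j : ℕ} (hj : j ≤ n) : 0 ≤ bseq n j := by
  rw [bseq_eq hn hj]
  have hN := Nconst_pos hn
  have h : (2:ℝ) ≤ (n:ℝ) := ncast_two hn
  have hjr : (j:ℝ) ≤ n := by exact_mod_cast hj
  apply div_nonneg
  · have : (0:ℝ) ≤ (j:ℝ) := by positivity
    nlinarith
  · nlinarith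

lemma bseq_n (hn : 2 ≤ n) : bseq n n = 0 := by
  rw [bseq_eq hn le_rfl]; ring

lemma lam_eq (hn : 2 ≤ n) : lamW n = 1/(n:ℝ) + 1/((n:ℝ)^2 * Nconst n) := by
  have hN := (Nconst_pos hn).ne'
  have hn0 : (n:ℝ) ≠ 0 := ncast_ne hn
  have h2 := ncast_two hn
  have hn1 : (n:ℝ) - 1 ≠ 0 := by linarith
  unfold lamW q3
  rw [if_pos rfl]
  field_simp
  ring

lemma q3_ne (hn : 2 ≤ n) {j : ℕ} (hj : j ≠ n) : q3 n j = lamW n := by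
  rw [lam_eq hn]
  unfold q3
  rw [if_neg hj]

end RealLemmas
section RealLemmas2

variable {n : ℕ}

lemma wvec_arg_nonneg (hn : 2 ≤ n) {j : ℕ} (hj1 : 1 ≤ j) (hj2 : j ≤ n) :
    0 ≤ lamW n - q2 n j + bseq n j := by
  have hN := Nconst_pos hn
  have hn0 : (n:ℝ) ≠ 0 := ncast_ne hn
  have h2 := ncast_two hn
  have hj1' : (1:ℝ) ≤ j := by exact_mod_cast hj1
  have hj2' : (j:ℝ) ≤ n := by exact_mod_cast hj2
  have key : lamW n - q2 n j + bseq n j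
      = (2 + (n:ℝ)*((n:ℝ)-1) + 2*(n:ℝ)*((j:ℝ)-1)*((n:ℝ)-(j:ℝ))) / (2*(n:ℝ)^2*Nconst n) := by
    rw [lam_eq hn, bseq_eq hn hj2]
    unfold q2 q1
    field_simp
    ring
  rw [key]
  apply div_nonneg
  · nlinarith [mul_nonneg (mul_nonneg (by linarith : (0:ℝ) ≤ (n:ℝ)) (by linarith : (0:ℝ) ≤ (j:ℝ)-1)) (by linarith : (0:ℝ) ≤ (n:ℝ)-(j:ℝ))]
  · nlinarith

lemma wvec_sq (hn : 2 ≤ n) (j : Fin n) :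
    wvec n j * wvec n j = lamW n - q2 n (j.val+1) + bseq n (j.val+1) := by
  exact Real.mul_self_sqrt (wvec_arg_nonneg hn (by omega) (by omega))

lemma aux_lin (m : ℕ) (c : ℝ) :
    ∑ j ∈ Finset.range m, (c - 2*(j:ℝ)) = m * (c - m + 1) := by
  induction m with
  | zero => simp
  | succ m ih =>
    rw [Finset.sum_range_succ, ih]
    push_cast
    ring

lemma sum_q1 (hn : 2 ≤ n) : ∑ j ∈ Finset.range n, q1 n (j+1) = 1 := by
  have hN := (Nconst_pos hn).ne'
  have hn0 : (n:ℝ) ≠ 0 := ncast_ne hn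
  unfold q1
  rw [Finset.sum_add_distrib]
  have h1 : ∑ _j ∈ Finset.range n, 1/(n:ℝ) = 1 := by
    rw [Finset.sum_const, Finset.card_range, nsmul_eq_mul]
    field_simp
  have h2 : ∑ j ∈ Finset.range n, ((n:ℝ) + 1 - 2*((j:ℕ)+1:ℕ)) / (2 * n * Nconst n)
      = (∑ j ∈ Finset.range n, (((n:ℝ) - 1) - 2*(j:ℝ))) / (2 * n * Nconst n) := by
    rw [Finset.sum_div]
    apply Finset.sum_congr rfl
    intro j _
    push_cast
    ring_nf
  push_cast at h2 ⊢
  rw [h1, h2, aux_lin]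
  simp

lemma aux_sq (m : ℕ) (c : ℝ) :
    ∑ j ∈ Finset.range m, (((j:ℝ)+1) * (c - ((j:ℝ)+1))) = m*(m+1)*(3*c - 2*m - 1)/6 := by
  induction m with
  | zero => simp
  | succ m ih =>
    rw [Finset.sum_range_succ, ih]
    push_cast
    ring

lemma sum_b (hn : 2 ≤ n) : ∑ j ∈ Finset.range (n-1), bseq n (j+1) = q3 n n := by
  have hN := (Nconst_pos hn).ne'
  have hn0 : (n:ℝ) ≠ 0 := ncast_ne hn
  have h1 : ∀ j ∈ Finset.range (n-1), bseq n (j+1)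
      = (((j:ℝ)+1) * ((n:ℝ) - ((j:ℝ)+1))) / (n * Nconst n) := by
    intro j hj
    rw [Finset.mem_range] at hj
    rw [bseq_eq hn (by omega)]
    push_cast
    ring_nf
  rw [Finset.sum_congr rfl h1, ← Finset.sum_div, aux_sq]
  have hc : ((n - 1 : ℕ) : ℝ) = (n:ℝ) - 1 := by
    have : 1 ≤ n := by omega
    push_cast [Nat.cast_sub this]; ring
  rw [hc]
  unfold q3
  rw [if_pos rfl]
  have hNval : (n:ℝ) * Nconst n = (n:ℝ)^2*((n:ℝ)^2-1)/6 + ((n:ℝ)-1) := by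
    unfold Nconst; field_simp
  field_simp
  linear_combination (-6) * hNval

lemma telescope (hn : 2 ≤ n) (j : ℕ) :
    q2 n (j+1) - bseq n (j+1) + bseq n j = q1 n (n - j) := by
  have := bseq_succ (n := n) j
  linarith

end RealLemmas2
section TensorLemmas

lemma mul_ite_zero {c : Prop} [Decidable c] (a b : ℂ) :
    (if c then a else 0) * (if c then b else 0) = if c then a * b else 0 := by
  split_ifs <;> simp

lemma conj_ite_zero {c : Prop} [Decidable c] (a : ℂ) :
    (starRingEnd ℂ) (if c then a else 0) = if c then (starRingEnd ℂ) a else 0 := by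
  split_ifs <;> simp

lemma sum_collapse {k : ℕ} {M : Type*} [AddCommMonoid M] {c : ℕ} (hc : c < k)
    (f : Fin k → M) (P : Fin k → Prop) [DecidablePred P] (hP : ∀ t, P t ↔ t.val = c) :
    ∑ t, (if P t then f t else 0) = f ⟨c, hc⟩ := by
  have h1 : ∀ t ∈ Finset.univ, (if P t then f t else 0) = (if t = ⟨c, hc⟩ then f t else 0) :=
    fun t _ => if_congr ((hP t).trans ⟨fun h => Fin.ext h, fun h => congrArg Fin.val h⟩) rfl rfl
  rw [Finset.sum_congr rfl h1, Finset.sum_ite_eq' Finset.univ (⟨c, hc⟩ : Fin k) f]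
  simp

lemma sum_collapse0 {k : ℕ} {M : Type*} [AddCommMonoid M]
    (f : Fin k → M) (P : Fin k → Prop) [DecidablePred P] (hP : ∀ t, ¬ P t) :
    ∑ t, (if P t then f t else 0) = 0 := by
  rw [Finset.sum_congr rfl (fun t _ => if_neg (hP t))]
  simp

variable {n : ℕ} {W : Matrix (Fin n) (Fin (n-1)) ℂ}

lemma TW_lt {x y z : Fin n} (hz : z.val + 1 < n) :
    TW W x y z = if x.val + y.val + 1 = n then W y ⟨z.val, by omega⟩ else 0 := by
  unfold TW
  split_ifs <;> first | rfl | omega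

lemma TW_last {x y z : Fin n} (hz : z.val + 1 = n) :
    TW W x y z = if x.val + y.val + 2 = n then ((Real.sqrt (bseq n (y.val+1)) : ℝ) : ℂ) else 0 := by
  unfold TW
  split_ifs <;> first | rfl | omega

lemma hW_col (hW : W ∈ WSet n) (z z' : Fin (n-1)) :
    ∑ y : Fin n, (starRingEnd ℂ) (W y z) * W y z' = if z = z' then ((lamW n : ℝ) : ℂ) else 0 := by
  have h := Matrix.ext_iff.2 hW.1 z z'
  rw [Matrix.mul_apply] at h
  simp only [Matrix.conjTranspose_apply, Matrix.smul_apply, Matrix.one_apply,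
    smul_eq_mul, mul_ite, mul_one, mul_zero, starRingEnd_apply] at h ⊢
  exact h

lemma hW_row (hn : 2 ≤ n) (hW : W ∈ WSet n) (y : Fin n) :
    ∑ z : Fin (n-1), (starRingEnd ℂ) (W y z) * W y z
      = ((q2 n (y.val+1) - bseq n (y.val+1) : ℝ) : ℂ) := by
  have h := Matrix.ext_iff.2 hW.2 y y
  rw [Matrix.mul_apply] at h
  simp only [Matrix.conjTranspose_apply, Matrix.smul_apply, Matrix.one_apply_eq,
    Matrix.sub_apply, Matrix.of_apply, smul_eq_mul, mul_one, starRingEnd_apply] at h ⊢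
  rw [Finset.sum_congr rfl (fun z _ => mul_comm (star (W y z)) (W y z)), h,
    wvec_sq hn y]
  push_cast
  ring

end TensorLemmas
section InnerSum

lemma inner_sum {m : ℕ} (hm : 2 ≤ m + 1) {W : Matrix (Fin (m+1)) (Fin (m+1-1)) ℂ}
    (hW : W ∈ WSet (m+1)) (y : Fin (m+1)) :
    ∑ x : Fin (m+1), ∑ z : Fin (m+1), (starRingEnd ℂ) (TW W x y z) * TW W x y z
      = ((q2 (m+1) (y.val+1) : ℝ) : ℂ) := by
  rw [Finset.sum_comm]
  rw [Fin.sum_univ_castSucc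
    (f := fun z => ∑ x : Fin (m+1), (starRingEnd ℂ) (TW W x y z) * TW W x y z)]
  have hWpart : ∀ z₀ : Fin m,
      ∑ x : Fin (m+1), (starRingEnd ℂ) (TW W x y z₀.castSucc) * TW W x y z₀.castSucc
        = (starRingEnd ℂ) (W y ⟨z₀.val, by simpa using z₀.isLt⟩)
            * W y ⟨z₀.val, by simpa using z₀.isLt⟩ := by
    intro z₀
    have hz : (z₀.castSucc : Fin (m+1)).val + 1 < m + 1 := by
      have := z₀.isLt; simp only [Fin.coe_castSucc]; omega
    have h1 : ∀ x : Fin (m+1),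
        (starRingEnd ℂ) (TW W x y z₀.castSucc) * TW W x y z₀.castSucc
          = if x.val + y.val + 1 = m + 1 then
              (starRingEnd ℂ) (W y ⟨z₀.val, by simpa using z₀.isLt⟩)
                * W y ⟨z₀.val, by simpa using z₀.isLt⟩ else 0 := by
      intro x
      rw [TW_lt hz, conj_ite_zero, mul_ite_zero]
      rfl
    rw [Finset.sum_congr rfl (fun x _ => h1 x)]
    exact sum_collapse (c := m - y.val) (by have := y.isLt; omega) _ _
      (fun t => by have := y.isLt; have := t.isLt; omega)
  have hlast : ∑ x : Fin (m+1),
      (starRingEnd ℂ) (TW W x y (Fin.last m)) * TW W x y (Fin.last m)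
        = ((bseq (m+1) (y.val+1) : ℝ) : ℂ) := by
    have hb : 0 ≤ bseq (m+1) (y.val+1) := bseq_nonneg hm (by have := y.isLt; omega)
    have h1 : ∀ x : Fin (m+1),
        (starRingEnd ℂ) (TW W x y (Fin.last m)) * TW W x y (Fin.last m)
          = if x.val + y.val + 2 = m + 1 then ((bseq (m+1) (y.val+1) : ℝ) : ℂ) else 0 := by
      intro x
      rw [TW_last (by simp [Fin.val_last]), conj_ite_zero, mul_ite_zero,
        Complex.conj_ofReal, ← Complex.ofReal_mul, Real.mul_self_sqrt hb]
    rw [Finset.sum_congr rfl (fun x _ => h1 x)]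
    by_cases hy : y.val < m
    · rw [sum_collapse (c := m - 1 - y.val) (by omega) _ _
        (fun t => by have := t.isLt; omega)]
    · rw [sum_collapse0 _ _ (fun t => by have := t.isLt; have := y.isLt; omega)]
      have hy1 : y.val + 1 = m + 1 := by have := y.isLt; omega
      rw [hy1, bseq_n hm]
      simp
  rw [Finset.sum_congr rfl (fun z₀ _ => hWpart z₀), hlast]
  have hrow : (∑ z₀ : Fin m, (starRingEnd ℂ) (W y ⟨z₀.val, by simpa using z₀.isLt⟩)
      * W y ⟨z₀.val, by simpa using z₀.isLt⟩)
      = ((q2 (m+1) (y.val+1) - bseq (m+1) (y.val+1) : ℝ) : ℂ) := hW_row hm hW y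
  rw [hrow]
  push_cast
  ring

end InnerSum
section OffDiag

variable {n : ℕ} {W : Matrix (Fin n) (Fin (n-1)) ℂ}

lemma TW_offdiag1 {x x' y z : Fin n} (h : x ≠ x') :
    (starRingEnd ℂ) (TW W x y z) * TW W x' y z = 0 := by
  by_cases hz : z.val + 1 < n
  · rw [TW_lt hz, TW_lt hz]
    split_ifs with h1 h2 <;> first | exact absurd (Fin.ext (by omega)) h | simp
  · have hz' : z.val + 1 = n := by have := z.isLt; omega
    rw [TW_last hz', TW_last hz']
    split_ifs with h1 h2 <;> first | exact absurd (Fin.ext (by omega)) h | simp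

lemma TW_offdiag2 {y y' : Fin n} (h : y ≠ y') (x z : Fin n) :
    (starRingEnd ℂ) (TW W x y z) * TW W x y' z = 0 := by
  by_cases hz : z.val + 1 < n
  · rw [TW_lt hz, TW_lt hz]
    split_ifs with h1 h2 <;> first | exact absurd (Fin.ext (by omega)) h | simp
  · have hz' : z.val + 1 = n := by have := z.isLt; omega
    rw [TW_last hz', TW_last hz']
    split_ifs with h1 h2 <;> first | exact absurd (Fin.ext (by omega)) h | simp

lemma TW_mixed {x y z z' : Fin n} (hz : z.val + 1 < n) (hz' : z'.val + 1 = n) :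
    (starRingEnd ℂ) (TW W x y z) * TW W x y z' = 0 := by
  rw [TW_lt hz, TW_last hz']
  split_ifs with h1 h2 <;> first | omega | simp

lemma TW_mixed' {x y z z' : Fin n} (hz : z.val + 1 = n) (hz' : z'.val + 1 < n) :
    (starRingEnd ℂ) (TW W x y z) * TW W x y z' = 0 := by
  rw [TW_last hz, TW_lt hz']
  split_ifs with h1 h2 <;> first | omega | simp

end OffDiag

section Mu1Diag

lemma mu1_diag {m : ℕ} (hm : 2 ≤ m + 1) {W : Matrix (Fin (m+1)) (Fin (m+1-1)) ℂ}
    (hW : W ∈ WSet (m+1)) (i : Fin (m+1)) :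
    ∑ y : Fin (m+1), ∑ z : Fin (m+1), (starRingEnd ℂ) (TW W i y z) * TW W i y z
      = ((q1 (m+1) (i.val+1) : ℝ) : ℂ) := by
  rw [Finset.sum_comm]
  rw [Fin.sum_univ_castSucc
    (f := fun z => ∑ y : Fin (m+1), (starRingEnd ℂ) (TW W i y z) * TW W i y z)]
  have hWpart : ∀ z₀ : Fin m,
      ∑ y : Fin (m+1), (starRingEnd ℂ) (TW W i y z₀.castSucc) * TW W i y z₀.castSucc
        = (starRingEnd ℂ) (W ⟨m - i.val, by omega⟩ ⟨z₀.val, by simpa using z₀.isLt⟩)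
            * W ⟨m - i.val, by omega⟩ ⟨z₀.val, by simpa using z₀.isLt⟩ := by
    intro z₀
    have hz : (z₀.castSucc : Fin (m+1)).val + 1 < m + 1 := by
      have := z₀.isLt; simp only [Fin.coe_castSucc]; omega
    have h1 : ∀ y : Fin (m+1),
        (starRingEnd ℂ) (TW W i y z₀.castSucc) * TW W i y z₀.castSucc
          = if i.val + y.val + 1 = m + 1 then
              (starRingEnd ℂ) (W y ⟨z₀.val, by simpa using z₀.isLt⟩)
                * W y ⟨z₀.val, by simpa using z₀.isLt⟩ else 0 := by
      intro y
      rw [TW_lt hz, conj_ite_zero, mul_ite_zero]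
      rfl
    rw [Finset.sum_congr rfl (fun y _ => h1 y)]
    exact sum_collapse (c := m - i.val) (by have := i.isLt; omega) _ _
      (fun t => by have := i.isLt; have := t.isLt; omega)
  have hlast : ∑ y : Fin (m+1),
      (starRingEnd ℂ) (TW W i y (Fin.last m)) * TW W i y (Fin.last m)
        = ((bseq (m+1) (m - i.val) : ℝ) : ℂ) := by
    have h1 : ∀ y : Fin (m+1),
        (starRingEnd ℂ) (TW W i y (Fin.last m)) * TW W i y (Fin.last m)
          = if i.val + y.val + 2 = m + 1 then ((bseq (m+1) (y.val+1) : ℝ) : ℂ) else 0 := by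
      intro y
      have hb : 0 ≤ bseq (m+1) (y.val+1) := bseq_nonneg hm (by have := y.isLt; omega)
      rw [TW_last (by simp [Fin.val_last]), conj_ite_zero, mul_ite_zero,
        Complex.conj_ofReal, ← Complex.ofReal_mul, Real.mul_self_sqrt hb]
    rw [Finset.sum_congr rfl (fun y _ => h1 y)]
    by_cases hi : i.val < m
    · rw [sum_collapse (c := m - 1 - i.val) (by omega)
        (fun y : Fin (m+1) => ((bseq (m+1) (y.val+1) : ℝ) : ℂ)) _
        (fun t => by have := t.isLt; omega)]
      have he : m - 1 - i.val + 1 = m - i.val := by omega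
      rw [he]
    · rw [sum_collapse0 _ _ (fun t => by have := t.isLt; have := i.isLt; omega)]
      rw [show m - i.val = 0 from by have := i.isLt; omega, bseq_zero]
      simp
  rw [Finset.sum_congr rfl (fun z₀ _ => hWpart z₀), hlast]
  have hrow : (∑ z₀ : Fin m,
      (starRingEnd ℂ) (W ⟨m - i.val, by omega⟩ ⟨z₀.val, by simpa using z₀.isLt⟩)
        * W ⟨m - i.val, by omega⟩ ⟨z₀.val, by simpa using z₀.isLt⟩)
      = ((q2 (m+1) (m - i.val + 1) - bseq (m+1) (m - i.val + 1) : ℝ) : ℂ) :=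
    hW_row hm hW (⟨m - i.val, by omega⟩ : Fin (m+1))
  rw [hrow]
  have htel := telescope hm (m - i.val)
  rw [show m + 1 - (m - i.val) = i.val + 1 from by have := i.isLt; omega] at htel
  rw [← Complex.ofReal_add]
  exact congrArg Complex.ofReal (by linarith)

end Mu1Diag
section Mu3

lemma sum_q2 {n : ℕ} (hn : 2 ≤ n) : ∑ j ∈ Finset.range n, q2 n (j+1) = 1 := sum_q1 hn

lemma mu3_lt {m : ℕ} {W : Matrix (Fin (m+1)) (Fin (m+1-1)) ℂ}
    (hW : W ∈ WSet (m+1)) {z z' : Fin (m+1)} (hz : z.val < m) (hz' : z'.val < m) :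
    ∑ x : Fin (m+1), ∑ y : Fin (m+1), (starRingEnd ℂ) (TW W x y z) * TW W x y z'
      = if z = z' then ((lamW (m+1) : ℝ) : ℂ) else 0 := by
  rw [Finset.sum_comm]
  have h1 : ∀ y : Fin (m+1), ∑ x : Fin (m+1), (starRingEnd ℂ) (TW W x y z) * TW W x y z'
      = (starRingEnd ℂ) (W y ⟨z.val, by omega⟩) * W y ⟨z'.val, by omega⟩ := by
    intro y
    have e : ∀ x : Fin (m+1), (starRingEnd ℂ) (TW W x y z) * TW W x y z'
        = if x.val + y.val + 1 = m+1 then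
            (starRingEnd ℂ) (W y ⟨z.val, by omega⟩) * W y ⟨z'.val, by omega⟩ else 0 := by
      intro x
      rw [TW_lt (by omega), TW_lt (by omega), conj_ite_zero, mul_ite_zero]
    rw [Finset.sum_congr rfl fun x _ => e x]
    exact sum_collapse (c := m - y.val) (by have := y.isLt; omega) _ _
      (fun t => by have := y.isLt; have := t.isLt; omega)
  rw [Finset.sum_congr rfl fun y _ => h1 y, hW_col hW]
  by_cases h : z = z'
  · subst h; rw [if_pos rfl, if_pos rfl]
  · have hne : ¬ ((⟨z.val, by omega⟩ : Fin (m+1-1)) = ⟨z'.val, by omega⟩) :=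
      fun hc => h (Fin.ext (Fin.mk_eq_mk.1 hc))
    simp only [if_neg h, if_neg hne]

lemma mu3_last {m : ℕ} (hm : 2 ≤ m + 1) {W : Matrix (Fin (m+1)) (Fin (m+1-1)) ℂ}
    (hW : W ∈ WSet (m+1)) {z : Fin (m+1)} (hz : z.val = m) :
    ∑ x : Fin (m+1), ∑ y : Fin (m+1), (starRingEnd ℂ) (TW W x y z) * TW W x y z
      = ((q3 (m+1) (m+1) : ℝ) : ℂ) := by
  rw [Finset.sum_comm]
  have h1 : ∀ y : Fin (m+1), ∑ x : Fin (m+1), (starRingEnd ℂ) (TW W x y z) * TW W x y z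
      = if y.val < m then ((bseq (m+1) (y.val+1) : ℝ) : ℂ) else 0 := by
    intro y
    have hb : 0 ≤ bseq (m+1) (y.val+1) := bseq_nonneg hm (by have := y.isLt; omega)
    have e : ∀ x : Fin (m+1), (starRingEnd ℂ) (TW W x y z) * TW W x y z
        = if x.val + y.val + 2 = m+1 then ((bseq (m+1) (y.val+1) : ℝ) : ℂ) else 0 := by
      intro x
      rw [TW_last (by omega), conj_ite_zero, mul_ite_zero, Complex.conj_ofReal,
        ← Complex.ofReal_mul, Real.mul_self_sqrt hb]
    rw [Finset.sum_congr rfl fun x _ => e x]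
    by_cases hy : y.val < m
    · rw [sum_collapse (c := m - 1 - y.val) (by omega) _ _
        (fun t => by have := t.isLt; omega), if_pos hy]
    · rw [sum_collapse0 _ _ (fun t => by have := t.isLt; have := y.isLt; omega), if_neg hy]
  rw [Finset.sum_congr rfl fun y _ => h1 y]
  rw [Fin.sum_univ_eq_sum_range (fun j => if j < m then ((bseq (m+1) (j+1) : ℝ) : ℂ) else 0)]
  rw [Finset.sum_range_succ, if_neg (lt_irrefl m), add_zero]
  rw [Finset.sum_congr rfl (fun j hj => if_pos (Finset.mem_range.1 hj))]
  have hsum := sum_b (n := m+1) hm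
  simp only [Nat.add_sub_cancel] at hsum
  exact_mod_cast congrArg (Complex.ofReal) hsum

end Mu3
/-- For `W ∈ 𝒲ₙ`, the tensor `T^W` has unit norm and moment map
image `(diag(q₁), diag(q₂), diag(q₃))`. -/
theorem TW_moment_map (n : ℕ) (hn : 2 ≤ n)
    (W : Matrix (Fin n) (Fin (n - 1)) ℂ) (hW : W ∈ WSet n) :
    Real.sqrt (tnormSq (TW W)) = 1 ∧
    mu1 (TW W) = Matrix.diagonal (fun j : Fin n => (q1 n (j.val + 1) : ℂ)) ∧
    mu2 (TW W) = Matrix.diagonal (fun j : Fin n => (q2 n (j.val + 1) : ℂ)) ∧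
    mu3 (TW W) = Matrix.diagonal (fun j : Fin n => (q3 n (j.val + 1) : ℂ)) := by
  obtain ⟨m, rfl⟩ : ∃ m, n = m + 1 := ⟨n - 1, by omega⟩
  have htnormC : ((tnormSq (TW W) : ℝ) : ℂ) = 1 := by
    have h0 : ((tnormSq (TW W) : ℝ) : ℂ)
        = ∑ x : Fin (m+1), ∑ y : Fin (m+1), ∑ z : Fin (m+1),
            (starRingEnd ℂ) (TW W x y z) * TW W x y z := by
      unfold tnormSq
      push_cast
      exact Finset.sum_congr rfl fun x _ => Finset.sum_congr rfl fun y _ =>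
        Finset.sum_congr rfl fun z _ => Complex.normSq_eq_conj_mul_self
    rw [h0, Finset.sum_comm]
    rw [Finset.sum_congr rfl fun y _ => inner_sum hn hW y]
    rw [show (∑ y : Fin (m+1), ((q2 (m+1) (y.val+1) : ℝ) : ℂ))
        = ((∑ y : Fin (m+1), q2 (m+1) (y.val+1) : ℝ) : ℂ) from (Complex.ofReal_sum _ _).symm]
    rw [Fin.sum_univ_eq_sum_range (fun j => q2 (m+1) (j+1)), sum_q2 hn]
    simp
  have htnorm : tnormSq (TW W) = 1 := by exact_mod_cast htnormC
  refine ⟨by rw [htnorm]; exact Real.sqrt_one, ?_, ?_, ?_⟩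
  · ext i i'
    simp only [mu1, Matrix.of_apply]
    rw [htnorm]
    by_cases h : i = i'
    · subst h
      rw [Matrix.diagonal_apply_eq, mu1_diag hn hW i]
      simp
    · rw [Matrix.diagonal_apply_ne _ h]
      rw [Finset.sum_congr rfl fun y _ => Finset.sum_congr rfl fun z _ =>
        TW_offdiag1 (W := W) h]
      simp
  · ext y y'
    simp only [mu2, Matrix.of_apply]
    rw [htnorm]
    by_cases h : y = y'
    · subst h
      rw [Matrix.diagonal_apply_eq, inner_sum hn hW y]
      simp
    · rw [Matrix.diagonal_apply_ne _ h]
      rw [Finset.sum_congr rfl fun x _ => Finset.sum_congr rfl fun z _ =>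
        TW_offdiag2 (W := W) h x z]
      simp
  · ext z z'
    simp only [mu3, Matrix.of_apply]
    rw [htnorm]
    by_cases hz : z.val < m
    · by_cases hz' : z'.val < m
      · rw [mu3_lt hW hz hz']
        by_cases h : z = z'
        · subst h
          rw [Matrix.diagonal_apply_eq, if_pos rfl, q3_ne hn (by omega)]
          simp
        · rw [Matrix.diagonal_apply_ne _ h, if_neg h]
          simp
      · have hzz : z ≠ z' := fun hc => absurd (congrArg Fin.val hc) (by omega)
        rw [Matrix.diagonal_apply_ne _ hzz]
        rw [Finset.sum_congr rfl fun x _ => Finset.sum_congr rfl fun y _ =>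
          TW_mixed (W := W) (by omega) (by have := z'.isLt; omega)]
        simp
    · by_cases hz' : z'.val < m
      · have hzz : z ≠ z' := fun hc => absurd (congrArg Fin.val hc) (by omega)
        rw [Matrix.diagonal_apply_ne _ hzz]
        rw [Finset.sum_congr rfl fun x _ => Finset.sum_congr rfl fun y _ =>
          TW_mixed' (W := W) (by have := z.isLt; omega) (by omega)]
        simp
      · have hzz : z = z' := Fin.ext (by have := z.isLt; have := z'.isLt; omega)
        subst hzz
        rw [Matrix.diagonal_apply_eq, mu3_last hn hW (by have := z.isLt; omega)]
        rw [show z.val + 1 = m + 1 from by have := z.isLt; omega]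
        simp

end NonFreePaper
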